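/- Let d ≥ 1, r > 0, b_1,...,b_d < r, l ∈ ℕ with 0 < r < l, and define Θ(N) = { s ∈ ℕ_{≥1}^d : 1/(2^l N) ≤ ∏_{j=1}^d 2^{−r s_j} s_j^{−b_j} < 1/N }. Then |Θ(N)| ≍ (log N)^{d−1} as N → ∞. -/

import Mathlib

open Real Finset


/-- The boundary layer `Θ(N) = { s ∈ ℕ_{≥1}^d : 1/(2^l N) ≤ ∏_j 2^(−r s_j) s_j^(−b_j) < 1/N }`. -/
def thetaSet (d : ℕ) (r : ℝ) (b : Fin d → ℝ) (l : ℕ) (N : ℕ) : Set (Fin d → ℕ) :=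
  {s | (∀ j, 1 ≤ s j) ∧
    1 / ((2 : ℝ) ^ l * N) ≤ ∏ j, (2 : ℝ) ^ (-(r * s j)) * (s j : ℝ) ^ (-(b j)) ∧
    ∏ j, (2 : ℝ) ^ (-(r * s j)) * (s j : ℝ) ^ (-(b j)) < 1 / N}



noncomputable def phi (r β : ℝ) (t : ℕ) : ℝ := r * Real.log 2 * t + β * Real.log t

lemma phi_lb {r β B : ℝ} (hr : 0 < r) (hB : |β| ≤ B) (t : ℕ) :
    r * Real.log 2 / 2 * t - B ^ 2 / (r * Real.log 2 / 2) ≤ phi r β t := by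
  have hlog2 : 0 < Real.log 2 := Real.log_pos one_lt_two
  have ha : 0 < r * Real.log 2 / 2 := by positivity
  have hB0 : 0 ≤ B := le_trans (abs_nonneg β) hB
  set a := r * Real.log 2 / 2 with hadef
  rcases Nat.eq_zero_or_pos t with h0 | h1
  · subst h0
    simp [phi]
    positivity
  · have ht1 : (1:ℝ) ≤ t := by exact_mod_cast h1
    have ht0 : (0:ℝ) < t := by linarith
    set x := Real.sqrt t with hx
    have hx0 : 0 < x := Real.sqrt_pos.mpr ht0
    have hxsq : x ^ 2 = (t:ℝ) := Real.sq_sqrt ht0.le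
    have hlogt : Real.log t ≤ 2 * x := by
      have h2 : Real.log ((t:ℝ)) = Real.log (x ^ 2) := by rw [hxsq]
      rw [h2, Real.log_pow]
      push_cast
      nlinarith [Real.log_le_sub_one_of_pos hx0]
    have hlogt0 : 0 ≤ Real.log t := Real.log_nonneg ht1
    have key : B * Real.log t ≤ a * t + B ^ 2 / a := by
      have h2 : 2 * B * x ≤ a * x ^ 2 + B ^ 2 / a := by
        have hc : B ^ 2 / a * a = B ^ 2 := div_mul_cancel₀ _ ha.ne'
        nlinarith [sq_nonneg (a * x - B), ha]
      calc B * Real.log t ≤ B * (2 * x) := by nlinarith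
        _ = 2 * B * x := by ring
        _ ≤ a * x ^ 2 + B ^ 2 / a := h2
        _ = a * t + B ^ 2 / a := by rw [hxsq]
    have hβ : -B * Real.log t ≤ β * Real.log t := by
      have := (abs_le.mp hB).1
      nlinarith
    have : phi r β t ≥ 2 * a * t - B * Real.log t := by
      unfold phi; rw [hadef]; nlinarith
    nlinarith


lemma phi_step {r β B : ℝ} (hB : |β| ≤ B) {t : ℕ} (ht : 1 ≤ t) :
    r * Real.log 2 - B / t ≤ phi r β (t + 1) - phi r β t ∧
    phi r β (t + 1) - phi r β t ≤ r * Real.log 2 + B / t := by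
  have ht0 : (0:ℝ) < t := by exact_mod_cast ht
  have hd : Real.log ((t:ℝ) + 1) - Real.log t = Real.log (((t:ℝ) + 1) / t) := by
    rw [Real.log_div (by linarith) ht0.ne']
  have h0 : 0 ≤ Real.log (((t:ℝ) + 1) / t) :=
    Real.log_nonneg (by rw [le_div_iff₀ ht0]; linarith)
  have h1 : Real.log (((t:ℝ) + 1) / t) ≤ 1 / t := by
    have := Real.log_le_sub_one_of_pos (show (0:ℝ) < ((t:ℝ)+1)/t by positivity)
    have : ((t:ℝ) + 1) / t - 1 = 1 / t := by field_simp; ring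
    linarith [Real.log_le_sub_one_of_pos (show (0:ℝ) < ((t:ℝ)+1)/t by positivity)]
  have hβ := abs_le.mp hB
  have hB0 : 0 ≤ B := le_trans (abs_nonneg β) hB
  have heq : phi r β (t + 1) - phi r β t
      = r * Real.log 2 + β * Real.log (((t:ℝ) + 1) / t) := by
    unfold phi; push_cast; rw [← hd]; ring
  rw [heq]
  set L := Real.log (((t:ℝ) + 1) / t)
  constructor
  · have : -(B / t) ≤ β * L := by
      rcases le_or_gt 0 β with h | h
      · have : 0 ≤ β * L := mul_nonneg h h0
        have : 0 ≤ B / t := by positivity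
        linarith
      · have : β * L ≥ β * (1 / t) := by
          apply mul_le_mul_of_nonpos_left h1 h.le
        have h2 : β * (1 / t) ≥ -B * (1 / t) := by
          apply mul_le_mul_of_nonneg_right hβ.1 (by positivity)
        have : (-B) * (1/t) = -(B/t) := by ring
        linarith [mul_le_mul_of_nonneg_right hβ.1 (show (0:ℝ) ≤ 1/t by positivity),
          mul_le_mul_of_nonpos_left h1 h.le]
    linarith
  · have : β * L ≤ B / t := by
      calc β * L ≤ |β * L| := le_abs_self _
        _ = |β| * |L| := abs_mul _ _
        _ ≤ B * (1 / t) := by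
            apply mul_le_mul hB (by rwa [abs_of_nonneg h0]) (abs_nonneg _) hB0
        _ = B / t := by ring
    linarith

lemma phi_growth {r β B : ℝ} (hB : |β| ≤ B) {T : ℕ} (hT1 : 1 ≤ T)
    (hT2 : B / T ≤ r * Real.log 2 / 2) {t t' : ℕ} (ht : T ≤ t) (htt : t ≤ t') :
    phi r β t + r * Real.log 2 / 2 * ((t':ℝ) - t) ≤ phi r β t' := by
  have hB0 : 0 ≤ B := le_trans (abs_nonneg β) hB
  have hT0 : (0:ℝ) < T := by exact_mod_cast hT1
  induction t' , htt using Nat.le_induction with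
  | base => simp
  | succ n hn ih =>
    have hn1 : 1 ≤ n := le_trans hT1 (le_trans ht hn)
    have hn0 : (0:ℝ) < n := by exact_mod_cast hn1
    have hstep := (phi_step (r := r) hB hn1).1
    have hBn : B / n ≤ B / T := by
      apply div_le_div_of_nonneg_left hB0 hT0
      exact_mod_cast le_trans ht hn
    push_cast
    have : r * Real.log 2 / 2 ≤ r * Real.log 2 - B / n := by linarith
    push_cast at ih
    linarith

lemma phi_exist {r β B lR : ℝ} (hr : 0 < r) (hB : |β| ≤ B) {T : ℕ} (hT1 : 1 ≤ T)
    (hT2 : B / T ≤ r * Real.log 2 / 2) (hT3 : B / T ≤ (lR - r) * Real.log 2)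
    {A : ℝ} (hA : phi r β T ≤ A) :
    ∃ t : ℕ, T ≤ t ∧ A < phi r β t ∧ phi r β t ≤ A + lR * Real.log 2 := by
  have hlog2 : 0 < Real.log 2 := Real.log_pos one_lt_two
  have ha : 0 < r * Real.log 2 / 2 := by positivity
  have hB0 : 0 ≤ B := le_trans (abs_nonneg β) hB
  have hT0 : (0:ℝ) < T := by exact_mod_cast hT1
  set a := r * Real.log 2 / 2 with hadef
  -- existence of some k with A < phi (T + k)
  have hex : ∃ k : ℕ, A < phi r β (T + k) := by
    set x := (A - phi r β T) / a with hxdef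
    have hx0 : 0 ≤ x := by
      apply div_nonneg _ ha.le; linarith
    refine ⟨⌈x⌉₊ + 1, ?_⟩
    have hg := phi_growth (r := r) hB hT1 hT2 (le_refl T) (Nat.le_add_right T (⌈x⌉₊ + 1))
    have hk : x < ((⌈x⌉₊ : ℝ) + 1) := by
      have := Nat.le_ceil x; linarith
    have : a * x < a * ((⌈x⌉₊:ℝ) + 1) := by
      exact mul_lt_mul_of_pos_left hk ha
    have hax : a * x = A - phi r β T := by
      rw [hxdef]; field_simp
    have hc : ((T + (⌈x⌉₊ + 1) : ℕ) : ℝ) - (T:ℝ) = (⌈x⌉₊:ℝ) + 1 := by push_cast; ring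
    rw [hc, ← hadef] at hg
    linarith
  classical
  let k0 := Nat.find hex
  have hk0 : A < phi r β (T + k0) := Nat.find_spec hex
  have hk0pos : 0 < k0 := by
    rcases Nat.eq_zero_or_pos k0 with h | h
    · exfalso
      have : A < phi r β (T + 0) := by rw [← h]; exact hk0
      simp at this; linarith
    · exact h
  obtain ⟨m, hm⟩ : ∃ m, k0 = m + 1 := ⟨k0 - 1, (Nat.succ_pred_eq_of_pos hk0pos).symm⟩
  have hmlt : ¬ A < phi r β (T + m) := Nat.find_min hex (by omega)
  push_neg at hmlt
  have hTm1 : 1 ≤ T + m := by omega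
  have hstep := (phi_step (r := r) hB hTm1).2
  have hBn : B / (T + m : ℕ) ≤ B / T := by
    apply div_le_div_of_nonneg_left hB0 hT0
    exact_mod_cast Nat.le_add_right T m
  refine ⟨T + k0, Nat.le_add_right _ _, hk0, ?_⟩
  have h1 : T + k0 = (T + m) + 1 := by omega
  rw [h1]
  rw [h1] at hk0
  have : phi r β (T + m + 1) ≤ phi r β (T + m) + (r * Real.log 2 + B / (T + m : ℕ)) := by
    linarith
  have hfin : r * Real.log 2 + B / (T + m : ℕ) ≤ lR * Real.log 2 := by
    have : B / (T + m : ℕ) ≤ (lR - r) * Real.log 2 := le_trans hBn hT3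
    nlinarith
  linarith

lemma phi_count {r β B : ℝ} (hr : 0 < r) (hB : |β| ≤ B) {T : ℕ} (hT1 : 1 ≤ T)
    (hT2 : B / T ≤ r * Real.log 2 / 2) (A L : ℝ) (X : ℕ) :
    ((Finset.Icc 1 X).filter fun t => A < phi r β t ∧ phi r β t ≤ A + L).card
      ≤ T + (⌈L / (r * Real.log 2 / 2)⌉₊ + 1) := by
  classical
  have hlog2 : 0 < Real.log 2 := Real.log_pos one_lt_two
  have ha : 0 < r * Real.log 2 / 2 := by positivity
  set a := r * Real.log 2 / 2 with hadef
  set S := (Finset.Icc 1 X).filter fun t => A < phi r β t ∧ phi r β t ≤ A + L with hS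
  set m := ⌈L / a⌉₊ with hm
  have hsplit := Finset.card_filter_add_card_filter_not
    (s := S) (p := fun t => t < T)
  have h1 : (S.filter fun t => t < T).card ≤ T := by
    have : (S.filter fun t => t < T) ⊆ Finset.Ico 1 T := by
      intro t ht
      simp only [Finset.mem_filter, hS, Finset.mem_Icc] at ht
      simp only [Finset.mem_Ico]
      exact ⟨ht.1.1.1, ht.2⟩
    calc (S.filter fun t => t < T).card ≤ (Finset.Ico 1 T).card := Finset.card_le_card this
      _ = T - 1 := by rw [Nat.card_Ico]
      _ ≤ T := Nat.sub_le _ _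
  have h2 : (S.filter fun t => ¬ t < T).card ≤ m + 1 := by
    set S2 := S.filter fun t => ¬ t < T with hS2
    rcases Finset.eq_empty_or_nonempty S2 with h | h
    · rw [h]; simp
    · set t₀ := S2.min' h with ht₀
      have ht₀S : t₀ ∈ S2 := S2.min'_mem h
      have hsub : S2 ⊆ Finset.Icc t₀ (t₀ + m) := by
        intro t ht
        simp only [Finset.mem_Icc]
        refine ⟨S2.min'_le t ht, ?_⟩
        have hTt₀ : T ≤ t₀ := by
          simp only [hS2, Finset.mem_filter, not_lt] at ht₀S; exact ht₀S.2
        have hTt : t₀ ≤ t := S2.min'_le t ht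
        have hg := phi_growth (r := r) hB hT1 hT2 hTt₀ hTt
        have ht₀mem : A < phi r β t₀ ∧ phi r β t₀ ≤ A + L := by
          have := Finset.mem_of_mem_filter t₀ ht₀S
          simp only [hS, Finset.mem_filter] at this; exact this.2
        have htmem : A < phi r β t ∧ phi r β t ≤ A + L := by
          have := Finset.mem_of_mem_filter t ht
          simp only [hS, Finset.mem_filter] at this; exact this.2
        rw [← hadef] at hg
        have hd : a * ((t:ℝ) - t₀) ≤ L := by linarith [ht₀mem.1, htmem.2]
        have : ((t:ℝ) - t₀) ≤ L / a := by
          rw [le_div_iff₀ ha]; linarith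
        have : ((t:ℝ) - t₀) ≤ (m:ℝ) := le_trans this (Nat.le_ceil _)
        have : (t:ℝ) ≤ (t₀:ℝ) + m := by linarith
        exact_mod_cast this
      calc S2.card ≤ (Finset.Icc t₀ (t₀ + m)).card := Finset.card_le_card hsub
        _ = m + 1 := by rw [Nat.card_Icc]; omega
  omega

lemma phi_ub {r β B : ℝ} (hB : |β| ≤ B) (t : ℕ) :
    phi r β t ≤ (r * Real.log 2 + B) * t := by
  have hB0 : 0 ≤ B := le_trans (abs_nonneg β) hB
  rcases Nat.eq_zero_or_pos t with h0 | h1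
  · subst h0; simp [phi]
  · have ht0 : (0:ℝ) < t := by exact_mod_cast h1
    have ht1 : (1:ℝ) ≤ t := by exact_mod_cast h1
    have hlt : Real.log t ≤ (t:ℝ) := by
      have := Real.log_le_sub_one_of_pos ht0; linarith
    have hl0 : 0 ≤ Real.log t := Real.log_nonneg ht1
    have : β * Real.log t ≤ B * t := by
      calc β * Real.log t ≤ |β| * Real.log t := by
            exact mul_le_mul_of_nonneg_right (le_abs_self β) hl0
        _ ≤ B * (t:ℝ) := mul_le_mul hB hlt hl0 hB0
    unfold phi; nlinarith

lemma theta_mem {d : ℕ} {r : ℝ} {b : Fin d → ℝ} {l N : ℕ} (hN : 1 ≤ N)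
    (s : Fin d → ℕ) (hs : ∀ j, 1 ≤ s j) :
    s ∈ thetaSet d r b l N ↔
      (Real.log N < ∑ j, phi r (b j) (s j) ∧
        ∑ j, phi r (b j) (s j) ≤ Real.log N + l * Real.log 2) := by
  have hN0 : (0:ℝ) < N := by exact_mod_cast hN
  have h2l : (0:ℝ) < (2:ℝ) ^ l := by positivity
  have hfac : ∀ j, (0:ℝ) < (2 : ℝ) ^ (-(r * s j)) * (s j : ℝ) ^ (-(b j)) := by
    intro j
    have hsj : (0:ℝ) < s j := by exact_mod_cast hs j
    exact mul_pos (Real.rpow_pos_of_pos two_pos _) (Real.rpow_pos_of_pos hsj _)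
  set Ω := ∏ j, (2 : ℝ) ^ (-(r * s j)) * (s j : ℝ) ^ (-(b j)) with hΩ
  have hΩpos : 0 < Ω := Finset.prod_pos fun j _ => hfac j
  have hlogΩ : Real.log Ω = -∑ j, phi r (b j) (s j) := by
    rw [hΩ, Real.log_prod (fun j _ => (hfac j).ne')]
    rw [← Finset.sum_neg_distrib]
    apply Finset.sum_congr rfl
    intro j _
    have hsj : (0:ℝ) < s j := by exact_mod_cast hs j
    rw [Real.log_mul (Real.rpow_pos_of_pos two_pos _).ne' (Real.rpow_pos_of_pos hsj _).ne',
      Real.log_rpow two_pos, Real.log_rpow hsj]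
    unfold phi; ring
  have hlog2lN : Real.log ((2:ℝ) ^ l * N) = l * Real.log 2 + Real.log N := by
    rw [Real.log_mul (by positivity) hN0.ne', Real.log_pow]
  constructor
  · rintro ⟨-, h1, h2⟩
    constructor
    · have := Real.log_lt_log hΩpos h2
      rw [hlogΩ, one_div, Real.log_inv] at this
      linarith
    · have := Real.log_le_log (by positivity) h1
      rw [hlogΩ, one_div, Real.log_inv, hlog2lN] at this
      linarith
  · rintro ⟨h1, h2⟩
    refine ⟨hs, ?_, ?_⟩
    · rw [show (1:ℝ) / ((2:ℝ)^l * N) = ((2:ℝ)^l * N)⁻¹ by rw [one_div]]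
      rw [← hΩ, ← Real.exp_log (show (0:ℝ) < ((2:ℝ)^l*N)⁻¹ by positivity), ← Real.exp_log hΩpos]
      apply Real.exp_le_exp.mpr
      rw [Real.log_inv, hlogΩ, hlog2lN]
      linarith
    · rw [show (1:ℝ) / (N:ℝ) = ((N:ℝ))⁻¹ by rw [one_div]]
      rw [← hΩ, ← Real.exp_log (show (0:ℝ) < ((N:ℝ))⁻¹ by positivity), ← Real.exp_log hΩpos]
      apply Real.exp_lt_exp.mpr
      rw [Real.log_inv, hlogΩ]
      linarith
set_option maxHeartbeats 1000000 in
/-- Lemma В: `|Θ(N)| ≍ (log N)^(d−1)` as `N → ∞`. -/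
theorem stmt_2 (d : ℕ) (hd : 1 ≤ d) (r : ℝ) (hr : 0 < r) (b : Fin d → ℝ)
    (hb : ∀ j, b j < r) (l : ℕ) (hl : r < l) :
    ∃ c C : ℝ, 0 < c ∧ 0 < C ∧ ∃ N₀ : ℕ, ∀ N : ℕ, N₀ ≤ N →
      c * (Real.log N) ^ (d - 1 : ℝ) ≤ ((thetaSet d r b l N).ncard : ℝ) ∧
      ((thetaSet d r b l N).ncard : ℝ) ≤ C * (Real.log N) ^ (d - 1 : ℝ) := by
  classical
  obtain ⟨d', rfl⟩ : ∃ d', d = d' + 1 := ⟨d - 1, by omega⟩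
  have hlog2 : 0 < Real.log 2 := Real.log_pos one_lt_two
  set B : ℝ := 1 + ∑ j, |b j| with hBdef
  have hB1 : (1:ℝ) ≤ B := by
    have : (0:ℝ) ≤ ∑ j, |b j| := Finset.sum_nonneg fun j _ => abs_nonneg _
    rw [hBdef]; linarith
  have hB0 : (0:ℝ) < B := lt_of_lt_of_le one_pos hB1
  have hBb : ∀ j, |b j| ≤ B := by
    intro j
    have : |b j| ≤ ∑ k, |b k| :=
      Finset.single_le_sum (fun k _ => abs_nonneg (b k)) (Finset.mem_univ j)
    rw [hBdef]; linarith
  set a : ℝ := r * Real.log 2 / 2 with hadef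
  have ha : 0 < a := by rw [hadef]; positivity
  set C0 : ℝ := B ^ 2 / a with hC0def
  have hC0 : 0 < C0 := by rw [hC0def]; positivity
  have hlr : r < (l:ℝ) := hl
  set δ : ℝ := min a (((l:ℝ) - r) * Real.log 2) with hδdef
  have hδ : 0 < δ := lt_min ha (mul_pos (by linarith) hlog2)
  set T : ℕ := ⌈B / δ⌉₊ + 1 with hTdef
  have hT1 : 1 ≤ T := by omega
  have hTpos : (0:ℝ) < T := by exact_mod_cast hT1
  have hTδ : B / T ≤ δ := by
    rw [div_le_iff₀ hTpos]
    have h1 : B / δ ≤ (⌈B/δ⌉₊:ℝ) := Nat.le_ceil _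
    have h2 : B/δ ≤ (T:ℝ) := by
      rw [hTdef]; push_cast; linarith
    calc B = (B/δ) * δ := by field_simp
      _ ≤ (T:ℝ) * δ := mul_le_mul_of_nonneg_right h2 hδ.le
      _ = δ * T := mul_comm _ _
  have hT2 : B / T ≤ a := le_trans hTδ (min_le_left _ _)
  have hT3 : B / T ≤ ((l:ℝ) - r) * Real.log 2 := le_trans hTδ (min_le_right _ _)
  set c₂ : ℝ := r * Real.log 2 + B with hc₂def
  have hc₂ : 0 < c₂ := by rw [hc₂def]; positivity
  set ε : ℝ := 1 / (2 * (d' + 1) * c₂) with hεdef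
  have hε : 0 < ε := by rw [hεdef]; positivity
  have hεbd : (d':ℝ) * c₂ * ε ≤ 1/2 := by
    rw [hεdef, mul_one_div, div_le_div_iff₀ (by positivity) two_pos]
    nlinarith [hc₂]
  set K : ℕ := T + (⌈((l:ℝ) * Real.log 2) / a⌉₊ + 1) with hKdef
  have hKpos : (0:ℝ) < K := by
    have : 1 ≤ K := by omega
    exact_mod_cast this
  set C₃ : ℝ := 2 / a + 1 with hC₃def
  have hC₃ : 0 < C₃ := by rw [hC₃def]; positivity
  set c₄ : ℝ := (l:ℝ) * Real.log 2 + ((d':ℝ) + 2) * C0 with hc₄def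
  have hc₄ : 0 < c₄ := by
    have hl0 : (0:ℝ) ≤ (l:ℝ) := Nat.cast_nonneg l
    rw [hc₄def]; positivity
  clear_value B a C0 δ c₂ ε C₃ c₄ T K
  refine ⟨(ε/2)^d', (K:ℝ) * C₃^d', by positivity, by positivity, ?_⟩
  set R : ℝ := max 1 (max (2 * phi r (b (Fin.last d')) T) (max (2/ε) c₄)) with hRdef
  refine ⟨⌈Real.exp R⌉₊, ?_⟩
  intro N hN
  have hexpN : Real.exp R ≤ (N:ℝ) := by
    refine le_trans (Nat.le_ceil _) ?_
    exact_mod_cast hN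
  have hN0 : (0:ℝ) < N := lt_of_lt_of_le (Real.exp_pos R) hexpN
  have hN1 : 1 ≤ N := by exact_mod_cast Nat.one_le_cast.mpr (by exact_mod_cast hN0)
  have hNR : R ≤ Real.log N := by
    rw [← Real.log_exp R]
    exact Real.log_le_log (Real.exp_pos R) hexpN
  set lnN := Real.log N with hlnN
  have hlnN1 : 1 ≤ lnN := le_trans (le_max_left _ _) hNR
  have hlnN0 : 0 < lnN := lt_of_lt_of_le one_pos hlnN1
  have hcond1 : 2 * phi r (b (Fin.last d')) T ≤ lnN :=
    le_trans (le_trans (le_max_left _ _) (le_max_right _ _)) hNR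
  have hcond2 : 2/ε ≤ lnN :=
    le_trans (le_trans (le_trans (le_max_left _ _) (le_max_right _ _)) (le_max_right _ _)) hNR
  have hcond3 : c₄ ≤ lnN :=
    le_trans (le_trans (le_trans (le_max_right _ _) (le_max_right _ _)) (le_max_right _ _)) hNR
  set P : ℕ := ⌊ε * lnN⌋₊ with hPdef
  set M : ℕ := ⌈(lnN + c₄)/a⌉₊ with hMdef
  clear_value lnN P M
  -- exponent rewrite
  have hexp : lnN ^ ((d' + 1 : ℕ) - 1 : ℝ) = lnN ^ d' := by
    have h : ((d' + 1 : ℕ) : ℝ) - 1 = ((d' : ℕ) : ℝ) := by push_cast; ring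
    rw [h, Real.rpow_natCast]
  -- box bound
  have hbox : ∀ s ∈ thetaSet (d'+1) r b l N, ∀ j, 1 ≤ s j ∧ s j ≤ M := by
    intro s hsΘ j
    have hs : ∀ j, 1 ≤ s j := hsΘ.1
    have hmem := (theta_mem hN1 s hs).mp hsΘ
    refine ⟨hs j, ?_⟩
    have hlbj : a * (s j : ℝ) - C0 ≤ phi r (b j) (s j) := by
      rw [hC0def, hadef]; exact phi_lb hr (hBb j) (s j)
    have hrest : ((d':ℝ)) * (-C0) ≤ ∑ k ∈ Finset.univ.erase j, phi r (b k) (s k) := by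
      have hcard : (Finset.univ.erase j).card = d' := by
        rw [Finset.card_erase_of_mem (Finset.mem_univ j)]
        simp
      have := Finset.card_nsmul_le_sum (Finset.univ.erase j)
        (fun k => phi r (b k) (s k)) (-C0) (fun k _ => by
          have h1 : a * (s k : ℝ) - C0 ≤ phi r (b k) (s k) := by
            rw [hC0def, hadef]; exact phi_lb hr (hBb k) (s k)
          have h2 : (0:ℝ) ≤ a * (s k : ℝ) := by positivity
          linarith)
      rw [hcard, nsmul_eq_mul] at this
      exact this
    have hFsplit : phi r (b j) (s j) + ∑ k ∈ Finset.univ.erase j, phi r (b k) (s k)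
        = ∑ k, phi r (b k) (s k) :=
      Finset.add_sum_erase _ (fun k => phi r (b k) (s k)) (Finset.mem_univ j)
    have hfinal : a * (s j : ℝ) ≤ lnN + c₄ := by
      rw [hc₄def]
      linarith [hlbj, hrest, hFsplit, hmem.2, hC0.le]
    have : (s j : ℝ) ≤ (lnN + c₄)/a := by
      rw [le_div_iff₀ ha]; linarith
    have : (s j : ℝ) ≤ (M:ℝ) := le_trans this (by rw [hMdef]; exact Nat.le_ceil _)
    exact_mod_cast this
  have hsub : thetaSet (d'+1) r b l N ⊆
      ↑(Fintype.piFinset fun _ : Fin (d'+1) => Finset.Icc 1 M) := by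
    intro s hsΘ
    simp only [Finset.mem_coe, Fintype.mem_piFinset, Finset.mem_Icc]
    exact fun j => hbox s hsΘ j
  have hfin : (thetaSet (d'+1) r b l N).Finite :=
    Set.Finite.subset (Finset.finite_toSet _) hsub
  set S := hfin.toFinset with hSdef
  have hncard : ((thetaSet (d'+1) r b l N).ncard : ℝ) = (S.card : ℝ) := by
    rw [Set.ncard_eq_toFinset_card _ hfin]
  have hmemS : ∀ s, s ∈ S ↔ s ∈ thetaSet (d'+1) r b l N := by
    intro s; rw [hSdef, Set.Finite.mem_toFinset]
  clear_value S
  have hT2' : B / (T:ℝ) ≤ r * Real.log 2 / 2 := by rw [← hadef]; exact hT2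
  have hKeq : T + (⌈((l:ℝ) * Real.log 2) / (r * Real.log 2 / 2)⌉₊ + 1) = K := by
    rw [hKdef, hadef]
  rw [hncard, hexp]
  constructor
  · -- lower bound
    have hεP : (ε/2) * lnN ≤ (P:ℝ) := by
      have h1 : ε * lnN < (P:ℝ) + 1 := by rw [hPdef]; exact Nat.lt_floor_add_one _
      have h2 : (2:ℝ) ≤ ε * lnN := by
        have h3 := mul_le_mul_of_nonneg_left hcond2 hε.le
        have h4 : ε * (2/ε) = 2 := by field_simp
        linarith
      linarith
    have hεP0 : (0:ℝ) ≤ (ε/2) * lnN := by positivity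
    set Q := Fintype.piFinset (fun _ : Fin d' => Finset.Icc 1 P) with hQdef
    clear_value Q
    have hchoice : ∀ s' : Fin d' → ℕ, ∃ t : ℕ, s' ∈ Q →
        T ≤ t ∧ (lnN - ∑ j : Fin d', phi r (b (Fin.castSucc j)) (s' j))
            < phi r (b (Fin.last d')) t ∧
          phi r (b (Fin.last d')) t
            ≤ (lnN - ∑ j : Fin d', phi r (b (Fin.castSucc j)) (s' j)) + (l:ℝ) * Real.log 2 := by
      intro s'
      by_cases h : s' ∈ Q
      · have hPbd : (P:ℝ) ≤ ε * lnN := by rw [hPdef]; exact Nat.floor_le (by positivity)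
        have hone : ∀ j : Fin d', phi r (b (Fin.castSucc j)) (s' j) ≤ c₂ * P := by
          intro j
          have hj := (Fintype.mem_piFinset.mp (by rwa [hQdef] at h)) j
          rw [Finset.mem_Icc] at hj
          have h1 : phi r (b (Fin.castSucc j)) (s' j) ≤ c₂ * (s' j : ℝ) := by
            rw [hc₂def]; exact phi_ub (hBb _) _
          have h2 : (s' j : ℝ) ≤ (P : ℝ) := by exact_mod_cast hj.2
          exact le_trans h1 (mul_le_mul_of_nonneg_left h2 hc₂.le)
        have hsum : ∑ j : Fin d', phi r (b (Fin.castSucc j)) (s' j) ≤ lnN/2 := by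
          have hsum1 : ∑ j : Fin d', phi r (b (Fin.castSucc j)) (s' j) ≤ (d':ℝ) * (c₂ * P) := by
            calc ∑ j : Fin d', phi r (b (Fin.castSucc j)) (s' j)
                ≤ ∑ _j : Fin d', c₂ * (P:ℝ) := Finset.sum_le_sum (fun j _ => hone j)
              _ = (d':ℝ) * (c₂ * P) := by
                  rw [Finset.sum_const, Finset.card_univ, Fintype.card_fin, nsmul_eq_mul]
          have hdc : (0:ℝ) ≤ (d':ℝ)*c₂ := by positivity
          have h3 : (d':ℝ)*c₂*(P:ℝ) ≤ (d':ℝ)*c₂*(ε*lnN) := mul_le_mul_of_nonneg_left hPbd hdc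
          have h5 : ((d':ℝ)*c₂*ε)*lnN ≤ (1/2)*lnN :=
            mul_le_mul_of_nonneg_right hεbd hlnN0.le
          have h6 : (d':ℝ)*(c₂*(P:ℝ)) = (d':ℝ)*c₂*(P:ℝ) := by ring
          have h7 : (d':ℝ)*c₂*(ε*lnN) = ((d':ℝ)*c₂*ε)*lnN := by ring
          linarith [hsum1]
        have hA : phi r (b (Fin.last d')) T
            ≤ lnN - ∑ j : Fin d', phi r (b (Fin.castSucc j)) (s' j) := by
          linarith [hcond1, hsum]
        obtain ⟨t, ht⟩ := phi_exist (lR := (l:ℝ)) hr (hBb (Fin.last d')) hT1 hT2' hT3 hA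
        exact ⟨t, fun _ => ht⟩
      · exact ⟨0, fun h' => absurd h' h⟩
    choose pick hpick using hchoice
    have hmaps : ∀ s' ∈ Q, (Fin.snoc s' (pick s') : Fin (d'+1) → ℕ) ∈ S := by
      intro s' hs'
      obtain ⟨ht1, ht2, ht3⟩ := hpick s' hs'
      have hs1 : ∀ j, 1 ≤ (Fin.snoc s' (pick s') : Fin (d'+1) → ℕ) j := by
        intro j
        induction j using Fin.lastCases with
        | last => rw [Fin.snoc_last]; omega
        | cast i =>
            rw [Fin.snoc_castSucc]
            have := (Fintype.mem_piFinset.mp (by rwa [hQdef] at hs')) i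
            rw [Finset.mem_Icc] at this
            exact this.1
      rw [hmemS]
      apply (theta_mem hN1 _ hs1).mpr
      have hsplit : ∑ k : Fin (d'+1), phi r (b k) ((Fin.snoc s' (pick s') : Fin (d'+1) → ℕ) k)
          = (∑ j : Fin d', phi r (b (Fin.castSucc j)) (s' j))
            + phi r (b (Fin.last d')) (pick s') := by
        rw [Fin.sum_univ_castSucc]
        simp [Fin.snoc_castSucc, Fin.snoc_last]
      rw [hsplit, ← hlnN]
      constructor
      · linarith [ht2]
      · linarith [ht3]
    have hinjQ : Set.InjOn (fun s' : Fin d' → ℕ => (Fin.snoc s' (pick s') : Fin (d'+1) → ℕ)) Q := by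
      intro x _ y _ hxy
      funext j
      have := congrFun hxy (Fin.castSucc j)
      simpa [Fin.snoc_castSucc] using this
    have hQS := Finset.card_le_card_of_injOn _ hmaps hinjQ
    have hQcard : Q.card = P ^ d' := by
      rw [hQdef, Fintype.card_piFinset]
      simp [Nat.card_Icc]
    have hPS : (P:ℝ)^d' ≤ (S.card : ℝ) := by
      exact_mod_cast (hQcard ▸ hQS)
    have hfq : ((ε/2)*lnN)^d' ≤ (P:ℝ)^d' := pow_le_pow_left₀ hεP0 hεP d'
    calc (ε/2)^d' * lnN^d' = ((ε/2)*lnN)^d' := (mul_pow _ _ _).symm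
      _ ≤ (P:ℝ)^d' := hfq
      _ ≤ (S.card:ℝ) := hPS
  · -- upper bound
    have hM : (M:ℝ) ≤ C₃ * lnN := by
      have h0 : (0:ℝ) ≤ (lnN + c₄)/a := by positivity
      have h1 : (M:ℝ) < (lnN + c₄)/a + 1 := by rw [hMdef]; exact Nat.ceil_lt_add_one h0
      have h2 : (lnN + c₄)/a ≤ (lnN + lnN)/a := by gcongr
      have h3 : (lnN + lnN)/a + 1 = C₃ * lnN - (lnN - 1) := by rw [hC₃def]; ring
      linarith [h1, h2, h3, hlnN1]
    have hcount : S.card ≤ K * (S.image Fin.init).card := by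
      apply Finset.card_le_mul_card_image
      intro s' hs'
      set A := lnN - ∑ j : Fin d', phi r (b (Fin.castSucc j)) (s' j) with hAdef
      have hinj : (S.filter fun s => Fin.init s = s').card ≤
          ((Finset.Icc 1 M).filter fun t => A < phi r (b (Fin.last d')) t ∧
            phi r (b (Fin.last d')) t ≤ A + (l:ℝ) * Real.log 2).card := by
        apply Finset.card_le_card_of_injOn (fun s => s (Fin.last d'))
        · intro s hsf
          rw [Finset.mem_coe, Finset.mem_filter] at hsf
          obtain ⟨hsS, hinit⟩ := hsf
          have hsΘ : s ∈ thetaSet (d'+1) r b l N := (hmemS s).mp hsS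
          have hs1 : ∀ j, 1 ≤ s j := hsΘ.1
          have hmem := (theta_mem hN1 s hs1).mp hsΘ
          have hsplitF : ∑ k, phi r (b k) (s k)
              = (∑ j : Fin d', phi r (b (Fin.castSucc j)) (s' j))
                + phi r (b (Fin.last d')) (s (Fin.last d')) := by
            rw [Fin.sum_univ_castSucc]
            congr 1
            apply Finset.sum_congr rfl
            intro j _
            rw [← hinit]
            rfl
          rw [Finset.mem_coe, Finset.mem_filter, Finset.mem_Icc]
          refine ⟨⟨(hbox s hsΘ (Fin.last d')).1, (hbox s hsΘ (Fin.last d')).2⟩, ?_, ?_⟩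
          · rw [hAdef]; linarith [hmem.1, hsplitF.le, hsplitF.ge]
          · rw [hAdef]; linarith [hmem.2, hsplitF.le, hsplitF.ge]
        · intro x hx y hy hxy
          simp only [Finset.coe_filter, Set.mem_setOf_eq] at hx hy
          funext i
          induction i using Fin.lastCases with
          | last => exact hxy
          | cast j => exact congrFun (hx.2.trans hy.2.symm) j
      refine le_trans hinj ?_
      rw [← hKeq]
      exact phi_count hr (hBb (Fin.last d')) hT1 hT2' A ((l:ℝ) * Real.log 2) M
    have himg : (S.image Fin.init).card ≤ M ^ d' := by
      have hsub2 : S.image Fin.init ⊆ Fintype.piFinset (fun _ : Fin d' => Finset.Icc 1 M) := by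
        intro s' hs'
        rw [Finset.mem_image] at hs'
        obtain ⟨s, hsS, rfl⟩ := hs'
        have hsΘ := (hmemS s).mp hsS
        rw [Fintype.mem_piFinset]
        intro j
        rw [Finset.mem_Icc]
        exact hbox s hsΘ (Fin.castSucc j)
      calc (S.image Fin.init).card ≤ _ := Finset.card_le_card hsub2
        _ = M ^ d' := by
          rw [Fintype.card_piFinset]
          simp [Nat.card_Icc]
    have hSK : S.card ≤ K * M ^ d' := le_trans hcount (Nat.mul_le_mul_left K himg)
    have hSKr : (S.card : ℝ) ≤ (K:ℝ) * (M:ℝ) ^ d' := by exact_mod_cast hSK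
    have h2 : (M:ℝ)^d' ≤ (C₃*lnN)^d' := pow_le_pow_left₀ (Nat.cast_nonneg M) hM d'
    have h3 : (K:ℝ) * (M:ℝ)^d' ≤ (K:ℝ) * (C₃*lnN)^d' := by
      exact mul_le_mul_of_nonneg_left h2 hKpos.le
    have h4 : (K:ℝ) * (C₃*lnN)^d' = (K:ℝ) * C₃^d' * lnN^d' := by rw [mul_pow]; ring
    linarith
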